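/- Let F : ℝ^N → ℝ^N be Lipschitz with constant L, W an N×N matrix with ‖W‖ ≤ r and L·r < 1, and W_in an N×m matrix with ‖W_in‖ ≤ M. Suppose x_u and x_v satisfy x_u(t+1) = F(W·x_u(t) + W_in·u(t+1)) and x_v(t+1) = F(W·x_v(t) + W_in·v(t+1)), and suppose ‖u(t) − v(t)‖ ≤ δ for all t ≥ T₀. Then for all t ≥ T₀: ‖x_u(t) − x_v(t)‖ ≤ (L·r)^(t−T₀)·‖x_u(T₀) − x_v(T₀)‖ + L·M·δ/(1 − L·r). -/
import Mathlib


open NNReal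

/-- Quantitative fading memory property: reservoir trajectories driven by inputs
that are `δ`-close from time `T₀` onward satisfy
`‖x_u t - x_v t‖ ≤ (L*r)^(t-T₀) * ‖x_u T₀ - x_v T₀‖ + L*M*δ/(1 - L*r)` for `t ≥ T₀`. -/
theorem fading_memory_property
    {E U : Type*} [NormedAddCommGroup E] [NormedSpace ℝ E]
    [NormedAddCommGroup U] [NormedSpace ℝ U]
    (F : E → E) (L : ℝ≥0) (hF : LipschitzWith L F)
    (W : E →L[ℝ] E) (r : ℝ) (hW : ‖W‖ ≤ r)
    (Win : U →L[ℝ] E) (M : ℝ) (hWin : ‖Win‖ ≤ M)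
    (hLr : (L : ℝ) * r < 1)
    (u v : ℕ → U) (xu xv : ℕ → E)
    (hu : ∀ t, xu (t + 1) = F (W (xu t) + Win (u (t + 1))))
    (hv : ∀ t, xv (t + 1) = F (W (xv t) + Win (v (t + 1))))
    (T₀ : ℕ) (δ : ℝ) (hδ : ∀ t, T₀ ≤ t → ‖u t - v t‖ ≤ δ) :
    ∀ t, T₀ ≤ t →
      ‖xu t - xv t‖ ≤
        ((L : ℝ) * r) ^ (t - T₀) * ‖xu T₀ - xv T₀‖ +
          (L : ℝ) * M * δ / (1 - (L : ℝ) * r) := by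

  have hr0 : (0:ℝ) ≤ r := le_trans (norm_nonneg W) hW
  have hM0 : (0:ℝ) ≤ M := le_trans (norm_nonneg Win) hWin
  have hL0 : (0:ℝ) ≤ L := L.coe_nonneg
  have hq0 : (0:ℝ) ≤ (L:ℝ)*r := mul_nonneg hL0 hr0
  have h1q : (0:ℝ) < 1 - (L:ℝ)*r := by linarith
  have hδ0 : 0 ≤ δ := le_trans (norm_nonneg _) (hδ T₀ le_rfl)
  have hC0 : 0 ≤ (L:ℝ)*M*δ := by positivity
  have hCdiv : 0 ≤ (L:ℝ)*M*δ/(1 - (L:ℝ)*r) := div_nonneg hC0 h1q.le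
  intro t ht
  induction t, ht using Nat.le_induction with
  | base =>
      simp only [Nat.sub_self, pow_zero, one_mul]
      linarith
  | succ t ht ih =>
      have key : ‖xu (t+1) - xv (t+1)‖ ≤ (L:ℝ)*r*‖xu t - xv t‖ + (L:ℝ)*M*δ := by
        rw [hu t, hv t]
        have h1 : ‖F (W (xu t) + Win (u (t + 1))) - F (W (xv t) + Win (v (t + 1)))‖
            ≤ (L:ℝ) * ‖(W (xu t) + Win (u (t + 1))) - (W (xv t) + Win (v (t + 1)))‖ := by
          have := hF.dist_le_mul (W (xu t) + Win (u (t + 1))) (W (xv t) + Win (v (t + 1)))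
          simpa [dist_eq_norm] using this
        have h2 : (W (xu t) + Win (u (t + 1))) - (W (xv t) + Win (v (t + 1)))
            = W (xu t - xv t) + Win (u (t+1) - v (t+1)) := by
          simp [map_sub]; abel
        have h3 : ‖W (xu t - xv t)‖ ≤ r * ‖xu t - xv t‖ :=
          le_trans (W.le_opNorm _) (mul_le_mul_of_nonneg_right hW (norm_nonneg _))
        have h4 : ‖Win (u (t+1) - v (t+1))‖ ≤ M * δ := by
          refine le_trans (Win.le_opNorm _) ?_
          exact mul_le_mul hWin (hδ (t+1) (le_trans ht (Nat.le_succ t))) (norm_nonneg _) hM0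
        calc ‖F (W (xu t) + Win (u (t + 1))) - F (W (xv t) + Win (v (t + 1)))‖
            ≤ (L:ℝ) * ‖W (xu t - xv t) + Win (u (t+1) - v (t+1))‖ := by rw [← h2]; exact h1
          _ ≤ (L:ℝ) * (‖W (xu t - xv t)‖ + ‖Win (u (t+1) - v (t+1))‖) :=
              mul_le_mul_of_nonneg_left (norm_add_le _ _) hL0
          _ ≤ (L:ℝ) * (r * ‖xu t - xv t‖ + M * δ) := by
              apply mul_le_mul_of_nonneg_left _ hL0; linarith
          _ = (L:ℝ)*r*‖xu t - xv t‖ + (L:ℝ)*M*δ := by ring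
      have hsub : t + 1 - T₀ = (t - T₀) + 1 := by omega
      rw [hsub, pow_succ]
      have step : (L:ℝ)*r * (((L:ℝ)*r)^(t-T₀) * ‖xu T₀ - xv T₀‖ + (L:ℝ)*M*δ/(1 - (L:ℝ)*r))
          + (L:ℝ)*M*δ
          = ((L:ℝ)*r)^(t-T₀) * ((L:ℝ)*r) * ‖xu T₀ - xv T₀‖ + (L:ℝ)*M*δ/(1 - (L:ℝ)*r) := by
        field_simp
        ring
      have h5 : (L:ℝ)*r*‖xu t - xv t‖ + (L:ℝ)*M*δ
          ≤ (L:ℝ)*r * (((L:ℝ)*r)^(t-T₀) * ‖xu T₀ - xv T₀‖ + (L:ℝ)*M*δ/(1 - (L:ℝ)*r))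
            + (L:ℝ)*M*δ := by
        have := mul_le_mul_of_nonneg_left ih hq0
        linarith
      linarith [key, step ▸ h5]
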